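/- Let H be a weak Hopf algebra with bijective antipode viewed as an R-bialgebroid over R = Im(Π^L). Then the category of left weak H-module coalgebras is isomorphic to the category of left module coalgebras over the R-bialgebroid H. In one direction, a weak H-module coalgebra (C, Δ_C, ε_C) becomes an R-coring via the projected coproduct c ↦ c_{(1)} ⊗_R c_{(2)} and counit c ↦ ε_C(1_{(1)}·c) 1_{(2)} ∈ R; in the other direction, an H-module coalgebra over the bialgebroid becomes a weak module coalgebra with coproduct c ↦ 1_{(1)}·c_{(1)} ⊗ 1_{(2)}·c_{(2)} and counit ε ∘ ε_C. -/

import Mathlib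

open TensorProduct LinearMap MulOpposite

noncomputable section
namespace DK

variable (k : Type*) [CommRing k] (H : Type*) [Ring H] [Algebra k H]

/-- Given `u = Σ xᵢ ⊗ bᵢ ∈ H ⊗ B` and `ε : H → k`, the linear map `g ↦ Σ ε(xᵢ * g) • bᵢ`. -/
def coPi (B : Type*) [AddCommGroup B] [Module k B] (ε : H →ₗ[k] k) (u : H ⊗[k] B) :
    H →ₗ[k] B :=
  ((TensorProduct.lid k B).toLinearMap
      ∘ₗ LinearMap.rTensor B (ε ∘ₗ LinearMap.mul' k H)
      ∘ₗ (TensorProduct.assoc k H H B).symm.toLinearMap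
      ∘ₗ LinearMap.lTensor H (TensorProduct.comm k B H).toLinearMap
      ∘ₗ (TensorProduct.assoc k H B H).toLinearMap)
    ∘ₗ TensorProduct.mk k (H ⊗[k] B) H u

/-- Given `u = Σ bᵢ ⊗ xᵢ ∈ B ⊗ H` and `ε : H → k`, the linear map `g ↦ Σ ε(g * xᵢ) • bᵢ`. -/
def coPiR (B : Type*) [AddCommGroup B] [Module k B] (ε : H →ₗ[k] k) (u : B ⊗[k] H) :
    H →ₗ[k] B :=
  ((TensorProduct.rid k B).toLinearMap
      ∘ₗ LinearMap.lTensor B (ε ∘ₗ LinearMap.mul' k H ∘ₗ (TensorProduct.comm k H H).toLinearMap)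
      ∘ₗ (TensorProduct.assoc k B H H).toLinearMap)
    ∘ₗ TensorProduct.mk k (B ⊗[k] H) H u

variable (Δ : H →ₗ[k] H ⊗[k] H) (ε : H →ₗ[k] k)

/-- `Π^L(g) = ε(1₍₁₎ g) • 1₍₂₎`. -/
def PiL : H →ₗ[k] H := coPi k H H ε (Δ 1)

/-- `Π^R(g) = ε(g 1₍₂₎) • 1₍₁₎`. -/
def PiR : H →ₗ[k] H := coPiR k H H ε (Δ 1)

/-- the map `h₍₁₎ ε(g h₍₂₎)` as a function of the input of `Δ`, i.e.
`u = Σ aᵢ ⊗ bᵢ ↦ Σ ε(g bᵢ) • aᵢ`. -/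
def PiRmap (g : H) : H ⊗[k] H →ₗ[k] H :=
  (TensorProduct.rid k H).toLinearMap ∘ₗ LinearMap.lTensor H (ε ∘ₗ LinearMap.mulLeft k g)

/-- `(a ⊗ b) ↦ ε(x a) * ε(b z)`. -/
def eps2 (x z : H) : H ⊗[k] H →ₗ[k] k :=
  (TensorProduct.lid k k).toLinearMap
    ∘ₗ TensorProduct.map (ε ∘ₗ LinearMap.mulLeft k x) (ε ∘ₗ LinearMap.mulRight k z)

/-- `(a ⊗ b) ↦ ε(a z) * ε(x b)`. -/
def eps2' (x z : H) : H ⊗[k] H →ₗ[k] k :=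
  (TensorProduct.lid k k).toLinearMap
    ∘ₗ TensorProduct.map (ε ∘ₗ LinearMap.mulRight k z) (ε ∘ₗ LinearMap.mulLeft k x)

/-- The weak bialgebra axioms for `(H, ·, Δ, ε)`: `Δ` is a multiplicative coassociative
counital coproduct, the weak counit axiom
`ε(xyz) = ε(x y₍₁₎) ε(y₍₂₎ z) = ε(x y₍₂₎) ε(y₍₁₎ z)` holds, and the weak unit axiom
`(Δ ⊗ id)Δ(1) = (Δ(1) ⊗ 1)(1 ⊗ Δ(1)) = (1 ⊗ Δ(1))(Δ(1) ⊗ 1)` holds. -/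
def IsWeakBialgebra : Prop :=
  (∀ x y : H, Δ (x * y) = Δ x * Δ y) ∧
  (∀ h : H, (TensorProduct.assoc k H H H) ((LinearMap.rTensor H Δ) (Δ h)) =
      (LinearMap.lTensor H Δ) (Δ h)) ∧
  (∀ h : H, (TensorProduct.lid k H) ((LinearMap.rTensor H ε) (Δ h)) = h) ∧
  (∀ h : H, (TensorProduct.rid k H) ((LinearMap.lTensor H ε) (Δ h)) = h) ∧
  (∀ x y z : H, ε (x * y * z) = eps2 k H ε x z (Δ y)) ∧
  (∀ x y z : H, ε (x * y * z) = eps2' k H ε x z (Δ y)) ∧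
  ((LinearMap.lTensor H Δ) (Δ 1) =
      (TensorProduct.assoc k H H H) ((Δ 1) ⊗ₜ[k] (1 : H)) * ((1 : H) ⊗ₜ[k] (Δ 1))) ∧
  ((LinearMap.lTensor H Δ) (Δ 1) =
      ((1 : H) ⊗ₜ[k] (Δ 1)) * (TensorProduct.assoc k H H H) ((Δ 1) ⊗ₜ[k] (1 : H)))

variable (S : H →ₗ[k] H)

/-- The weak Hopf algebra axioms: `H` is a weak bialgebra with antipode `S` satisfying
`h₍₁₎ S(h₍₂₎) = Π^L(h)`, `S(h₍₁₎) h₍₂₎ = Π^R(h)` and `S(h₍₁₎) h₍₂₎ S(h₍₃₎) = S(h)`. -/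
def IsWeakHopf : Prop :=
  IsWeakBialgebra k H Δ ε ∧
  (∀ h : H, LinearMap.mul' k H ((LinearMap.lTensor H S) (Δ h)) = PiL k H Δ ε h) ∧
  (∀ h : H, LinearMap.mul' k H ((LinearMap.rTensor H S) (Δ h)) = PiR k H Δ ε h) ∧
  (∀ h : H,
    (LinearMap.mul' k H ∘ₗ LinearMap.lTensor H (LinearMap.mul' k H))
        ((TensorProduct.map S (TensorProduct.map LinearMap.id S))
          ((LinearMap.lTensor H Δ) (Δ h))) = S h)

end DK
end
noncomputable section
namespace DK
open TensorProduct LinearMap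

variable (k : Type*) [CommRing k] (H : Type*) [Ring H] [Algebra k H]
  (Δ : H →ₗ[k] H ⊗[k] H) (ε : H →ₗ[k] k)
  (C : Type*) [AddCommGroup C] [Module k C]
  (act : H →ₗ[k] C →ₗ[k] C) (ΔC : C →ₗ[k] C ⊗[k] C) (εC : C →ₗ[k] k)

/-- Evaluation `H ⊗ C → C` of the action. -/
def evC : H ⊗[k] C →ₗ[k] C := TensorProduct.lift act

/-- Diagonal action `(g ⊗ g') ⊗ (c ⊗ c') ↦ g·c ⊗ g'·c'`. -/
def Psi2 : (H ⊗[k] H) ⊗[k] (C ⊗[k] C) →ₗ[k] C ⊗[k] C :=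
  TensorProduct.map (evC k H C act) (evC k H C act) ∘ₗ
    (TensorProduct.tensorTensorTensorComm k H H C C).toLinearMap

/-- `C` is a left weak `H`-module coalgebra: a `k`-coalgebra with a left `H`-action such
that `Δ_C(h·c) = h₍₁₎·c₍₁₎ ⊗ h₍₂₎·c₍₂₎` and `ε_C(hg·c) = ε_H(h g₍₂₎) ε_C(g₍₁₎·c)`. -/
def IsWeakModuleCoalgebra : Prop :=
  (∀ c : C, (TensorProduct.assoc k C C C) ((LinearMap.rTensor C ΔC) (ΔC c)) =
      (LinearMap.lTensor C ΔC) (ΔC c)) ∧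
  (∀ c : C, (TensorProduct.lid k C) ((LinearMap.rTensor C εC) (ΔC c)) = c) ∧
  (∀ c : C, (TensorProduct.rid k C) ((LinearMap.lTensor C εC) (ΔC c)) = c) ∧
  (∀ (g h : H) (c : C), act (g * h) c = act g (act h c)) ∧
  (∀ c : C, act 1 c = c) ∧
  (∀ (h : H) (c : C), ΔC (act h c) = (Psi2 k H C act) ((Δ h) ⊗ₜ[k] (ΔC c))) ∧
  (∀ (h g : H) (c : C), εC (act (h * g) c) =
    (TensorProduct.lid k k)
      ((TensorProduct.map (εC ∘ₗ act.flip c) (ε ∘ₗ LinearMap.mulLeft k h)) (Δ g)))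

/-- The counit `ε̃_C : C → R ⊆ H`, `c ↦ ε_C(1₍₁₎ · c) 1₍₂₎`. -/
def etil : C →ₗ[k] H :=
  ((TensorProduct.lid k H).toLinearMap
      ∘ₗ LinearMap.rTensor H (εC ∘ₗ evC k H C act)
      ∘ₗ (TensorProduct.assoc k H C H).symm.toLinearMap
      ∘ₗ LinearMap.lTensor H (TensorProduct.comm k H C).toLinearMap
      ∘ₗ (TensorProduct.assoc k H H C).toLinearMap)
    ∘ₗ TensorProduct.mk k (H ⊗[k] H) C (Δ 1)

end DK
end

noncomputable section
namespace DK14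
open TensorProduct LinearMap

variable (k : Type*) [CommRing k] (H : Type*) [Ring H] [Algebra k H]
  (Δ : H →ₗ[k] H ⊗[k] H) (ε : H →ₗ[k] k) (Sinv : H →ₗ[k] H)
  (C : Type*) [AddCommGroup C] [Module k C] (act : H →ₗ[k] C →ₗ[k] C)

/-- Balancing relations for `C ⊗_R C` over `R = Im Π^L`; the `R`-bimodule structure on `C`
is `r · c · r' = (s_H r t_H r') · c` with `s_H` the inclusion and `t_H = S⁻¹|_R`. -/
def relCb : Submodule k (C ⊗[k] C) :=
  Submodule.span k {x | ∃ (g : H) (c c' : C),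
    x = (act (Sinv (DK.PiL k H Δ ε g)) c) ⊗ₜ[k] c' - c ⊗ₜ[k] (act (DK.PiL k H Δ ε g) c')}

/-- Balancing relations for `C ⊗_R C ⊗_R C` inside `C ⊗ (C ⊗ C)`. -/
def relCb3 : Submodule k (C ⊗[k] (C ⊗[k] C)) :=
  Submodule.span k
    ({x | ∃ (g : H) (c : C) (y : C ⊗[k] C),
        x = (act (Sinv (DK.PiL k H Δ ε g)) c) ⊗ₜ[k] y -
          c ⊗ₜ[k] ((LinearMap.rTensor C (act (DK.PiL k H Δ ε g))) y)} ∪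
     {x | ∃ (g : H) (c c' c'' : C),
        x = c ⊗ₜ[k] ((act (Sinv (DK.PiL k H Δ ε g)) c') ⊗ₜ[k] c'') -
          c ⊗ₜ[k] (c' ⊗ₜ[k] (act (DK.PiL k H Δ ε g) c''))})

variable (ΔCb : C →ₗ[k] C ⊗[k] C) (εCb : C →ₗ[k] H)

/-- `C` is a left module coalgebra over the `R`-bialgebroid `H` (`R = Im Π^L`): an
`R`-coring with a left `H`-action whose coproduct and counit (a map `C → R ⊆ H`) are
`H`-linear. -/
def IsBgdModuleCoalgebra : Prop :=
  (∀ (g h : H) (c : C), act (g * h) c = act g (act h c)) ∧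
  (∀ c : C, act 1 c = c) ∧
  -- the counit takes values in `R = Im Π^L`:
  (∀ c : C, DK.PiL k H Δ ε (εCb c) = εCb c) ∧
  -- `R`-coring axioms:
  (∀ c : C, (relCb3 k H Δ ε Sinv C act).mkQ
      ((TensorProduct.assoc k C C C) ((LinearMap.rTensor C ΔCb) (ΔCb c))) =
    (relCb3 k H Δ ε Sinv C act).mkQ ((LinearMap.lTensor C ΔCb) (ΔCb c))) ∧
  (∀ c : C, DK.evC k H C act ((TensorProduct.map εCb LinearMap.id) (ΔCb c)) = c) ∧
  (∀ c : C, DK.evC k H C act ((TensorProduct.map (Sinv ∘ₗ εCb) LinearMap.id)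
      ((TensorProduct.comm k C C) (ΔCb c))) = c) ∧
  -- `Δ_C` is `H`-linear:
  (∀ (h : H) (c : C), (relCb k H Δ ε Sinv C act).mkQ (ΔCb (act h c)) =
    (relCb k H Δ ε Sinv C act).mkQ ((DK.Psi2 k H C act) ((Δ h) ⊗ₜ[k] (ΔCb c)))) ∧
  -- `ε_C` is `H`-linear: `ε_C(h · c) = Π^L(h s_H(ε_C c))`:
  (∀ (h : H) (c : C), εCb (act h c) = DK.PiL k H Δ ε (h * εCb c))

/-- The section `σ_C : C ⊗_R C → C ⊗ C`, `c ⊗ c' ↦ 1₍₁₎·c ⊗ 1₍₂₎·c'`. -/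
def sigmaC : C ⊗[k] C →ₗ[k] C ⊗[k] C :=
  DK.Psi2 k H C act ∘ₗ TensorProduct.mk k (H ⊗[k] H) (C ⊗[k] C) (Δ 1)

end DK14

/-!
Everything rests on two properties of the unit coproduct `Δ(1) = 1₍₁₎ ⊗ 1₍₂₎` of a weak
bialgebra. It is idempotent and absorbs every `Δ(h)`, so a weak module coalgebra satisfies
`Δ_C(c) = 1₍₁₎·c₍₁₎ ⊗ 1₍₂₎·c₍₂₎`. And elements of `R = Im Π^L` can be moved across it,
`1₍₁₎ Π̄^L(g) ⊗ 1₍₂₎ = 1₍₁₎ ⊗ 1₍₂₎ Π^L(g)` with `Π̄^L = S⁻¹ ∘ Π^L`, so the section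
`σ_C(c ⊗ c') = 1₍₁₎·c ⊗ 1₍₂₎·c'` and its three-fold analogue kill the balancing relations
and descend to `C ⊗_R C` and `C ⊗_R C ⊗_R C`; the coring axioms are then transported along
`σ_C` in both directions. The counits correspond through `ε_C(h·c) = ε(h ε̃_C(c))`, and
`ε̃_C(c) = Π^L(y)` for any `y` with `ε_C(a·c) = ε(a y)` for all `a`.
-/

noncomputable section
namespace DK

variable {k : Type*} [CommRing k] {H : Type*} [Ring H] [Algebra k H]
  {Δ : H →ₗ[k] H ⊗[k] H} {ε : H →ₗ[k] k} {S Sinv : H →ₗ[k] H}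

namespace IsWeakBialgebra

variable (hw : IsWeakBialgebra k H Δ ε)
include hw

theorem comul_mul (x y : H) : Δ (x * y) = Δ x * Δ y := hw.1 x y

theorem coassoc (h : H) :
    TensorProduct.assoc k H H H (rTensor H Δ (Δ h)) = lTensor H Δ (Δ h) := hw.2.1 h

theorem lid_rTensor_counit (h : H) : TensorProduct.lid k H (rTensor H ε (Δ h)) = h :=
  hw.2.2.1 h

theorem rid_lTensor_counit (h : H) : TensorProduct.rid k H (lTensor H ε (Δ h)) = h :=
  hw.2.2.2.1 h

theorem counit_mul_mul (x y z : H) : ε (x * y * z) = eps2 k H ε x z (Δ y) := hw.2.2.2.2.1 x y z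

theorem counit_mul_mul' (x y z : H) : ε (x * y * z) = eps2' k H ε x z (Δ y) :=
  hw.2.2.2.2.2.1 x y z

theorem lTensor_comul_comul_one :
    lTensor H Δ (Δ 1) =
      TensorProduct.assoc k H H H (Δ 1 ⊗ₜ[k] (1 : H)) * ((1 : H) ⊗ₜ[k] Δ 1) :=
  hw.2.2.2.2.2.2.1

theorem lTensor_comul_comul_one' :
    lTensor H Δ (Δ 1) =
      ((1 : H) ⊗ₜ[k] Δ 1) * TensorProduct.assoc k H H H (Δ 1 ⊗ₜ[k] (1 : H)) :=
  hw.2.2.2.2.2.2.2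

theorem comul_mul_comul_one (h : H) : Δ h * Δ 1 = Δ h := by rw [← hw.comul_mul, mul_one]

theorem comul_one_mul_comul (h : H) : Δ 1 * Δ h = Δ h := by rw [← hw.comul_mul, one_mul]

end IsWeakBialgebra

namespace IsWeakHopf

variable (hh : IsWeakHopf k H Δ ε S)
include hh

theorem isWeakBialgebra : IsWeakBialgebra k H Δ ε := hh.1

theorem mul_antipode_eq_PiL (h : H) : mul' k H (lTensor H S (Δ h)) = PiL k H Δ ε h := hh.2.1 h

theorem antipode_mul_eq_PiR (h : H) : mul' k H (rTensor H S (Δ h)) = PiR k H Δ ε h :=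
  hh.2.2.1 h

theorem antipode_mul_antipode (h : H) :
    (mul' k H ∘ₗ lTensor H (mul' k H))
      (TensorProduct.map S (TensorProduct.map id S) (lTensor H Δ (Δ h))) = S h :=
  hh.2.2.2 h

end IsWeakHopf

variable (Δ ε) in
/-- `Π̄^L(g) = ε(1₍₂₎ g) 1₍₁₎`, which agrees with `S⁻¹ ∘ Π^L`. -/
def PiLbar (g : H) : H := TensorProduct.rid k H (lTensor H (ε ∘ₗ mulRight k g) (Δ 1))

section WeakBialgebra

variable {s : Finset (H × H)} (hw : IsWeakBialgebra k H Δ ε)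
  (hs : Δ 1 = ∑ p ∈ s, p.1 ⊗ₜ[k] p.2)
include hs

theorem PiL_eq_sum (g : H) : PiL k H Δ ε g = ∑ p ∈ s, ε (p.1 * g) • p.2 := by
  simp [PiL, coPi, hs, map_sum]

theorem PiR_eq_sum (g : H) : PiR k H Δ ε g = ∑ p ∈ s, ε (g * p.2) • p.1 := by
  simp [PiR, coPiR, hs, map_sum]

theorem PiLbar_eq_sum (g : H) : PiLbar Δ ε g = ∑ p ∈ s, ε (p.2 * g) • p.1 := by
  simp [PiLbar, hs, map_sum]

include hw

theorem sum_counit_fst_smul_snd : ∑ p ∈ s, ε p.1 • p.2 = 1 := by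
  simpa [hs, map_sum] using hw.lid_rTensor_counit 1

theorem sum_counit_snd_smul_fst : ∑ p ∈ s, ε p.2 • p.1 = 1 := by
  simpa [hs, map_sum] using hw.rid_lTensor_counit 1

theorem sum_tmul_comul_snd :
    ∑ p ∈ s, p.1 ⊗ₜ[k] Δ p.2 =
      ∑ p ∈ s, ∑ q ∈ s, p.1 ⊗ₜ[k] ((p.2 * q.1) ⊗ₜ[k] q.2) := by
  have h := hw.lTensor_comul_comul_one
  simp only [hs, map_sum, TensorProduct.sum_tmul, TensorProduct.tmul_sum, Finset.sum_mul,
    Finset.mul_sum, Algebra.TensorProduct.tmul_mul_tmul, TensorProduct.assoc_tmul,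
    lTensor_tmul, one_mul, mul_one] at h
  rw [h, Finset.sum_comm]

theorem sum_tmul_comul_snd' :
    ∑ p ∈ s, p.1 ⊗ₜ[k] Δ p.2 =
      ∑ p ∈ s, ∑ q ∈ s, q.1 ⊗ₜ[k] ((p.1 * q.2) ⊗ₜ[k] p.2) := by
  have h := hw.lTensor_comul_comul_one'
  simp only [hs, map_sum, TensorProduct.sum_tmul, TensorProduct.tmul_sum, Finset.sum_mul,
    Finset.mul_sum, Algebra.TensorProduct.tmul_mul_tmul, TensorProduct.assoc_tmul,
    lTensor_tmul, one_mul, mul_one] at h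
  rw [h, Finset.sum_comm]

theorem sum_comul_fst_tmul :
    ∑ p ∈ s, Δ p.1 ⊗ₜ[k] p.2 =
      ∑ p ∈ s, ∑ q ∈ s, (p.1 ⊗ₜ[k] (p.2 * q.1)) ⊗ₜ[k] q.2 := by
  apply (TensorProduct.assoc k H H H).injective
  have h := hw.coassoc 1
  simp only [hs, map_sum, rTensor_tmul, lTensor_tmul] at h
  simp [h, sum_tmul_comul_snd hw hs, map_sum, TensorProduct.assoc_tmul]

theorem sum_comul_fst_tmul' :
    ∑ p ∈ s, Δ p.1 ⊗ₜ[k] p.2 =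
      ∑ p ∈ s, ∑ q ∈ s, (q.1 ⊗ₜ[k] (p.1 * q.2)) ⊗ₜ[k] p.2 := by
  apply (TensorProduct.assoc k H H H).injective
  have h := hw.coassoc 1
  simp only [hs, map_sum, rTensor_tmul, lTensor_tmul] at h
  simp [h, sum_tmul_comul_snd' hw hs, map_sum, TensorProduct.assoc_tmul]

theorem counit_mul_PiL (x g : H) : ε (x * PiL k H Δ ε g) = ε (x * g) := by
  have h := hw.counit_mul_mul' x 1 g
  simp only [mul_one, hs, eps2', map_sum, coe_comp, Function.comp_apply, map_tmul,
    mulLeft_apply, mulRight_apply, LinearEquiv.coe_coe, lid_tmul, smul_eq_mul] at h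
  simp only [PiL_eq_sum hs, Finset.mul_sum, mul_smul_comm, map_sum, map_smul, smul_eq_mul, h]

theorem counit_mul_PiLbar (x g : H) : ε (x * PiLbar Δ ε g) = ε (x * g) := by
  have h := hw.counit_mul_mul x 1 g
  simp only [mul_one, hs, eps2, map_sum, coe_comp, Function.comp_apply, map_tmul,
    mulLeft_apply, mulRight_apply, LinearEquiv.coe_coe, lid_tmul, smul_eq_mul] at h
  simp only [PiLbar_eq_sum hs, Finset.mul_sum, mul_smul_comm, map_sum, map_smul, smul_eq_mul, h,
    mul_comm]

theorem counit_PiL (g : H) : ε (PiL k H Δ ε g) = ε g := by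
  simpa using counit_mul_PiL hw hs 1 g

theorem comul_PiL (g : H) : Δ (PiL k H Δ ε g) = Δ 1 * (PiL k H Δ ε g ⊗ₜ[k] 1) := by
  have h := congrArg ((TensorProduct.lid k (H ⊗[k] H)).toLinearMap ∘ₗ
      rTensor (H ⊗[k] H) (ε ∘ₗ mulRight k g)) (sum_tmul_comul_snd' hw hs)
  simp only [map_sum, coe_comp, LinearEquiv.coe_coe, Function.comp_apply, rTensor_tmul,
    mulRight_apply, lid_tmul] at h
  simp only [PiL_eq_sum hs, map_sum, map_smul, h, hs, TensorProduct.sum_tmul, Finset.sum_mul,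
    Finset.mul_sum, TensorProduct.smul_tmul', Algebra.TensorProduct.tmul_mul_tmul,
    mul_smul_comm, mul_one]
  rw [Finset.sum_comm]

theorem comul_PiLbar (g : H) : Δ (PiLbar Δ ε g) = Δ 1 * (1 ⊗ₜ[k] PiLbar Δ ε g) := by
  have h := congrArg ((TensorProduct.rid k (H ⊗[k] H)).toLinearMap ∘ₗ
      lTensor (H ⊗[k] H) (ε ∘ₗ mulRight k g)) (sum_comul_fst_tmul hw hs)
  simp only [map_sum, coe_comp, LinearEquiv.coe_coe, Function.comp_apply, lTensor_tmul,
    mulRight_apply, rid_tmul] at h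
  simp only [PiLbar_eq_sum hs, map_sum, map_smul, h, hs, TensorProduct.tmul_sum, Finset.sum_mul,
    Finset.mul_sum, TensorProduct.tmul_smul, Algebra.TensorProduct.tmul_mul_tmul,
    mul_smul_comm, mul_one, Finset.smul_sum]
  rw [Finset.sum_comm]

theorem comul_mul_PiL (x g : H) :
    Δ (x * PiL k H Δ ε g) = Δ x * (PiL k H Δ ε g ⊗ₜ[k] 1) := by
  rw [hw.comul_mul, comul_PiL hw hs, ← mul_assoc, hw.comul_mul_comul_one]

theorem comul_mul_PiLbar (x g : H) :
    Δ (x * PiLbar Δ ε g) = Δ x * (1 ⊗ₜ[k] PiLbar Δ ε g) := by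
  rw [hw.comul_mul, comul_PiLbar hw hs, ← mul_assoc, hw.comul_mul_comul_one]

theorem sum_PiLbar_fst_tmul_snd : ∑ q ∈ s, PiLbar Δ ε q.1 ⊗ₜ[k] q.2 = Δ 1 := by
  have h := congrArg (rTensor H ((TensorProduct.rid k H).toLinearMap ∘ₗ lTensor H ε))
    (sum_comul_fst_tmul hw hs)
  simp only [map_sum, rTensor_tmul, coe_comp, LinearEquiv.coe_coe, Function.comp_apply,
    hw.rid_lTensor_counit, lTensor_tmul, rid_tmul] at h
  rw [hs, h, Finset.sum_comm]
  simp only [PiLbar_eq_sum hs, TensorProduct.sum_tmul]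

theorem sum_PiL_fst_mul_snd : ∑ q ∈ s, PiL k H Δ ε q.1 * q.2 = 1 := by
  have h := congrArg ((TensorProduct.lid k H).toLinearMap ∘ₗ rTensor H ε)
    (hw.comul_mul_comul_one 1)
  simp only [hs, Finset.sum_mul, Finset.mul_sum, Algebra.TensorProduct.tmul_mul_tmul,
    map_sum, rTensor_tmul, coe_comp, LinearEquiv.coe_coe, Function.comp_apply,
    lid_tmul, sum_counit_fst_smul_snd hw hs] at h
  simp only [PiL_eq_sum hs, Finset.sum_mul, smul_mul_assoc]
  exact h

theorem comul_one_mul_one_tmul_PiL_eq_sum (g : H) :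
    Δ 1 * (1 ⊗ₜ[k] PiL k H Δ ε g) =
      ∑ p ∈ s, ∑ q ∈ s, ε (p.1 * q.2 * g) • (q.1 ⊗ₜ[k] p.2) := by
  have h := congrArg (lTensor H ((TensorProduct.lid k H).toLinearMap ∘ₗ rTensor H ε))
    (congrArg (lTensor H (mulRight k (PiL k H Δ ε g ⊗ₜ[k] (1 : H))))
      (sum_tmul_comul_snd' hw hs))
  simp only [map_sum, lTensor_tmul, mulRight_apply, ← comul_mul_PiL hw hs,
    Algebra.TensorProduct.tmul_mul_tmul, mul_one, coe_comp, LinearEquiv.coe_coe,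
    Function.comp_apply, hw.lid_rTensor_counit, rTensor_tmul, lid_tmul,
    TensorProduct.tmul_smul] at h
  simp only [hs, Finset.sum_mul, Algebra.TensorProduct.tmul_mul_tmul, mul_one, h,
    counit_mul_PiL hw hs]

theorem comul_one_mul_PiLbar_tmul_one_eq_sum (g : H) :
    Δ 1 * (PiLbar Δ ε g ⊗ₜ[k] 1) =
      ∑ p ∈ s, ∑ q ∈ s, ε (p.1 * q.2 * g) • (q.1 ⊗ₜ[k] p.2) := by
  have h := congrArg (rTensor H ((TensorProduct.rid k H).toLinearMap ∘ₗ lTensor H ε))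
    (congrArg (rTensor H (mulRight k ((1 : H) ⊗ₜ[k] PiLbar Δ ε g)))
      (sum_comul_fst_tmul' hw hs))
  simp only [map_sum, rTensor_tmul, mulRight_apply, ← comul_mul_PiLbar hw hs,
    Algebra.TensorProduct.tmul_mul_tmul, mul_one, coe_comp, LinearEquiv.coe_coe,
    Function.comp_apply, hw.rid_lTensor_counit, lTensor_tmul, rid_tmul,
    counit_mul_PiLbar hw hs] at h
  simp only [hs, Finset.sum_mul, Algebra.TensorProduct.tmul_mul_tmul, mul_one, h,
    TensorProduct.smul_tmul']

theorem comul_one_mul_PiLbar_tmul_one (g : H) :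
    Δ 1 * (PiLbar Δ ε g ⊗ₜ[k] 1) = Δ 1 * (1 ⊗ₜ[k] PiL k H Δ ε g) := by
  rw [comul_one_mul_PiLbar_tmul_one_eq_sum hw hs, comul_one_mul_one_tmul_PiL_eq_sum hw hs]

theorem comul_mul_PiLbar_tmul_one (y g : H) :
    Δ y * (PiLbar Δ ε g ⊗ₜ[k] 1) = Δ y * (1 ⊗ₜ[k] PiL k H Δ ε g) := by
  rw [← hw.comul_mul_comul_one y, mul_assoc, comul_one_mul_PiLbar_tmul_one hw hs, ← mul_assoc]

end WeakBialgebra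

section WeakHopf

variable {s : Finset (H × H)} (hh : IsWeakHopf k H Δ ε S)
  (hs : Δ 1 = ∑ p ∈ s, p.1 ⊗ₜ[k] p.2)
include hh hs

theorem sum_antipode_fst_mul_snd : ∑ p ∈ s, S p.1 * p.2 = 1 := by
  have h := hh.antipode_mul_eq_PiR 1
  simp only [hs, map_sum, rTensor_tmul, mul'_apply, PiR_eq_sum hs, one_mul] at h
  rw [h, sum_counit_snd_smul_fst hh.isWeakBialgebra hs]

/-- `S x = S(x₍₁₎) x₍₂₎ S(x₍₃₎) = S(1₍₁₎) 1₍₂₎ · 1'₍₁₎ S(1'₍₂₎ x) = 1 · Π^L(x)`. -/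
theorem antipode_eq_PiL_of_comul_mul {x : H} (hx : ∀ y, Δ (y * x) = Δ y * (1 ⊗ₜ[k] x)) :
    S x = PiL k H Δ ε x := by
  have hw := hh.isWeakBialgebra
  have hΔx : Δ x = ∑ p ∈ s, p.1 ⊗ₜ[k] (p.2 * x) := by
    simpa [hs, Finset.sum_mul, Algebra.TensorProduct.tmul_mul_tmul] using hx 1
  have hΔΔx : lTensor H Δ (Δ x) =
      ∑ p ∈ s, ∑ q ∈ s, p.1 ⊗ₜ[k] ((p.2 * q.1) ⊗ₜ[k] (q.2 * x)) := by
    have h := congrArg (lTensor H (mulRight k ((1 : H) ⊗ₜ[k] x))) (sum_tmul_comul_snd hw hs)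
    simpa only [map_sum, lTensor_tmul, mulRight_apply, Algebra.TensorProduct.tmul_mul_tmul,
      mul_one, ← hx, hΔx] using h
  have hPiL : ∑ q ∈ s, q.1 * S (q.2 * x) = PiL k H Δ ε x := by
    simpa only [hΔx, map_sum, lTensor_tmul, mul'_apply] using hh.mul_antipode_eq_PiL x
  rw [← hh.antipode_mul_antipode x, hΔΔx]
  simp only [map_sum, TensorProduct.map_tmul, lTensor_tmul, mul'_apply, coe_comp,
    Function.comp_apply, id_coe, id_eq]
  calc ∑ p ∈ s, ∑ q ∈ s, S p.1 * (p.2 * q.1 * S (q.2 * x))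
      = (∑ p ∈ s, S p.1 * p.2) * ∑ q ∈ s, q.1 * S (q.2 * x) := by
        rw [Finset.sum_mul]
        simp only [Finset.mul_sum, mul_assoc]
    _ = PiL k H Δ ε x := by rw [sum_antipode_fst_mul_snd hh hs, one_mul, hPiL]

theorem antipode_PiLbar (g : H) : S (PiLbar Δ ε g) = PiL k H Δ ε g := by
  have hw := hh.isWeakBialgebra
  rw [antipode_eq_PiL_of_comul_mul hh hs (fun y => comul_mul_PiLbar hw hs y g), PiL_eq_sum hs,
    PiL_eq_sum hs]
  simp only [counit_mul_PiLbar hw hs]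

theorem Sinv_PiL (hinv : ∀ h, Sinv (S h) = h) (g : H) :
    Sinv (PiL k H Δ ε g) = PiLbar Δ ε g := by
  rw [← antipode_PiLbar hh hs, hinv]

end WeakHopf

section Module

variable {C : Type*} [AddCommGroup C] [Module k C] {act : H →ₗ[k] C →ₗ[k] C}

theorem evC_tmul (x : H) (c : C) : evC k H C act (x ⊗ₜ[k] c) = act x c := by
  simp [evC]

theorem Psi2_tmul (x y : H) (c c' : C) :
    Psi2 k H C act ((x ⊗ₜ[k] y) ⊗ₜ[k] (c ⊗ₜ[k] c')) = act x c ⊗ₜ[k] act y c' := by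
  simp [Psi2, evC, tensorTensorTensorComm_tmul]

theorem sigmaC_apply (w : C ⊗[k] C) :
    DK14.sigmaC k H Δ C act w = Psi2 k H C act (Δ 1 ⊗ₜ[k] w) := rfl

theorem etil_eq_sum {s : Finset (H × H)} (hs : Δ 1 = ∑ p ∈ s, p.1 ⊗ₜ[k] p.2)
    (f : C →ₗ[k] k) (c : C) : etil k H Δ C act f c = ∑ p ∈ s, f (act p.1 c) • p.2 := by
  simp [etil, hs, map_sum, evC]

variable (act) in
def Psi3 : (H ⊗[k] (H ⊗[k] H)) ⊗[k] (C ⊗[k] (C ⊗[k] C)) →ₗ[k] C ⊗[k] (C ⊗[k] C) :=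
  TensorProduct.map (evC k H C act) (Psi2 k H C act) ∘ₗ
    (TensorProduct.tensorTensorTensorComm k H (H ⊗[k] H) C (C ⊗[k] C)).toLinearMap

theorem Psi3_tmul (x : H) (v : H ⊗[k] H) (c : C) (w : C ⊗[k] C) :
    Psi3 act ((x ⊗ₜ[k] v) ⊗ₜ[k] (c ⊗ₜ[k] w)) =
      act x c ⊗ₜ[k] Psi2 k H C act (v ⊗ₜ[k] w) := by
  simp [Psi3, evC, tensorTensorTensorComm_tmul]

theorem assoc_Psi2_tmul_act (V : H ⊗[k] H) (x : H) (W : C ⊗[k] C) (z : C) :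
    TensorProduct.assoc k C C C (Psi2 k H C act (V ⊗ₜ[k] W) ⊗ₜ[k] act x z) =
      Psi3 act (TensorProduct.assoc k H H H (V ⊗ₜ[k] x) ⊗ₜ[k]
        TensorProduct.assoc k C C C (W ⊗ₜ[k] z)) := by
  induction V using TensorProduct.induction_on with
  | zero => simp
  | add u v hu hv => simp only [add_tmul, map_add, hu, hv]
  | tmul a b =>
    induction W using TensorProduct.induction_on with
    | zero => simp
    | add w₁ w₂ h₁ h₂ => simp only [add_tmul, tmul_add, map_add, h₁, h₂]
    | tmul c c' => simp [Psi2_tmul, Psi3_tmul]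

variable (Δ act) in
/-- `c ⊗ c' ⊗ c'' ↦ 1₍₁₎·c ⊗ 1₍₂₎·c' ⊗ 1₍₃₎·c''`, the three-fold analogue of `sigmaC`. -/
def sigmaC3 : C ⊗[k] (C ⊗[k] C) →ₗ[k] C ⊗[k] (C ⊗[k] C) :=
  Psi3 act ∘ₗ
    TensorProduct.mk k (H ⊗[k] (H ⊗[k] H)) (C ⊗[k] (C ⊗[k] C)) (lTensor H Δ (Δ 1))

section Action

variable (hact : ∀ (g h : H) (c : C), act (g * h) c = act g (act h c))
include hact

theorem Psi2_tmul_act_tmul (U : H ⊗[k] H) (z : H) (c c' : C) :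
    Psi2 k H C act (U ⊗ₜ[k] (act z c ⊗ₜ[k] c')) =
      Psi2 k H C act ((U * (z ⊗ₜ[k] 1)) ⊗ₜ[k] (c ⊗ₜ[k] c')) := by
  induction U using TensorProduct.induction_on with
  | zero => simp
  | add u v hu hv => simp only [add_tmul, add_mul, map_add, hu, hv]
  | tmul x y => simp [Psi2_tmul, Algebra.TensorProduct.tmul_mul_tmul, hact]

theorem Psi2_tmul_tmul_act (U : H ⊗[k] H) (z : H) (c c' : C) :
    Psi2 k H C act (U ⊗ₜ[k] (c ⊗ₜ[k] act z c')) =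
      Psi2 k H C act ((U * (1 ⊗ₜ[k] z)) ⊗ₜ[k] (c ⊗ₜ[k] c')) := by
  induction U using TensorProduct.induction_on with
  | zero => simp
  | add u v hu hv => simp only [add_tmul, add_mul, map_add, hu, hv]
  | tmul x y => simp [Psi2_tmul, Algebra.TensorProduct.tmul_mul_tmul, hact]

theorem Psi2_tmul_rTensor_act (U : H ⊗[k] H) (z : H) (w : C ⊗[k] C) :
    Psi2 k H C act (U ⊗ₜ[k] rTensor C (act z) w) =
      Psi2 k H C act ((U * (z ⊗ₜ[k] 1)) ⊗ₜ[k] w) := by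
  induction w using TensorProduct.induction_on with
  | zero => simp
  | add w₁ w₂ h₁ h₂ => simp only [map_add, tmul_add, h₁, h₂]
  | tmul c c' => rw [rTensor_tmul, Psi2_tmul_act_tmul hact]

theorem Psi2_tmul_Psi2 (U V : H ⊗[k] H) (w : C ⊗[k] C) :
    Psi2 k H C act (U ⊗ₜ[k] Psi2 k H C act (V ⊗ₜ[k] w)) =
      Psi2 k H C act ((U * V) ⊗ₜ[k] w) := by
  induction U using TensorProduct.induction_on with
  | zero => simp
  | add u v hu hv => simp only [add_tmul, add_mul, map_add, hu, hv]
  | tmul x y =>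
    induction V using TensorProduct.induction_on with
    | zero => simp
    | add u v hu hv => simp only [add_tmul, tmul_add, mul_add, map_add, hu, hv]
    | tmul a b =>
      induction w using TensorProduct.induction_on with
      | zero => simp
      | add w₁ w₂ h₁ h₂ => simp only [tmul_add, map_add, h₁, h₂]
      | tmul c c' => simp [Psi2_tmul, Algebra.TensorProduct.tmul_mul_tmul, hact]

theorem Psi3_lTensor_tmul_act_tmul (U : H ⊗[k] H) (z : H) (c : C) (y : C ⊗[k] C) :
    Psi3 act (lTensor H Δ U ⊗ₜ[k] (act z c ⊗ₜ[k] y)) =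
      Psi3 act (lTensor H Δ (U * (z ⊗ₜ[k] 1)) ⊗ₜ[k] (c ⊗ₜ[k] y)) := by
  induction U using TensorProduct.induction_on with
  | zero => simp
  | add u v hu hv => simp only [add_tmul, add_mul, map_add, hu, hv]
  | tmul x y => simp [Psi3_tmul, Algebra.TensorProduct.tmul_mul_tmul, hact]

variable {s : Finset (H × H)} (hw : IsWeakBialgebra k H Δ ε)
  (hs : Δ 1 = ∑ p ∈ s, p.1 ⊗ₜ[k] p.2)
include hw hs

theorem Psi3_lTensor_tmul_tmul_rTensor_act_PiL (U : H ⊗[k] H) (g : H) (c : C)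
    (y : C ⊗[k] C) :
    Psi3 act (lTensor H Δ U ⊗ₜ[k] (c ⊗ₜ[k] rTensor C (act (PiL k H Δ ε g)) y)) =
      Psi3 act (lTensor H Δ (U * (1 ⊗ₜ[k] PiL k H Δ ε g)) ⊗ₜ[k] (c ⊗ₜ[k] y)) := by
  induction U using TensorProduct.induction_on with
  | zero => simp
  | add u v hu hv => simp only [add_tmul, add_mul, map_add, hu, hv]
  | tmul x z =>
    simp only [lTensor_tmul, Algebra.TensorProduct.tmul_mul_tmul, mul_one, Psi3_tmul,
      Psi2_tmul_rTensor_act hact, comul_mul_PiL hw hs]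

theorem Psi2_comul_tmul_act_PiLbar_tmul (y g : H) (c c' : C) :
    Psi2 k H C act (Δ y ⊗ₜ[k] (act (PiLbar Δ ε g) c ⊗ₜ[k] c')) =
      Psi2 k H C act (Δ y ⊗ₜ[k] (c ⊗ₜ[k] act (PiL k H Δ ε g) c')) := by
  rw [Psi2_tmul_act_tmul hact, Psi2_tmul_tmul_act hact, comul_mul_PiLbar_tmul_one hw hs]

end Action

section Balanced

variable {s : Finset (H × H)} (hh : IsWeakHopf k H Δ ε S)
  (hs : Δ 1 = ∑ p ∈ s, p.1 ⊗ₜ[k] p.2) (hinv : ∀ h, Sinv (S h) = h)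
  (hact : ∀ (g h : H) (c : C), act (g * h) c = act g (act h c))
include hh hs hinv hact

theorem relCb_le_ker_sigmaC :
    DK14.relCb k H Δ ε Sinv C act ≤ ker (DK14.sigmaC k H Δ C act) := by
  rw [DK14.relCb, Submodule.span_le]
  rintro _ ⟨g, c, c', rfl⟩
  rw [SetLike.mem_coe, mem_ker, map_sub, sub_eq_zero, sigmaC_apply, sigmaC_apply,
    Sinv_PiL hh hs hinv, Psi2_comul_tmul_act_PiLbar_tmul hact hh.isWeakBialgebra hs]

theorem relCb3_le_ker_sigmaC3 :
    DK14.relCb3 k H Δ ε Sinv C act ≤ ker (sigmaC3 Δ act) := by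
  rw [DK14.relCb3, Submodule.span_le]
  rintro _ (⟨g, c, y, rfl⟩ | ⟨g, c, c', c'', rfl⟩) <;>
    simp only [SetLike.mem_coe, mem_ker, map_sub, sub_eq_zero, sigmaC3, coe_comp,
      Function.comp_apply, TensorProduct.mk_apply, Sinv_PiL hh hs hinv]
  · rw [Psi3_lTensor_tmul_act_tmul hact,
      Psi3_lTensor_tmul_tmul_rTensor_act_PiL hact hh.isWeakBialgebra hs,
      comul_one_mul_PiLbar_tmul_one hh.isWeakBialgebra hs]
  · generalize Δ 1 = U
    induction U using TensorProduct.induction_on with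
    | zero => simp
    | add u v hu hv => simp only [add_tmul, map_add, hu, hv]
    | tmul x z =>
      rw [lTensor_tmul, Psi3_tmul, Psi3_tmul,
        Psi2_comul_tmul_act_PiLbar_tmul hact hh.isWeakBialgebra hs]

end Balanced

theorem lTensor_Psi2 {D D₀ : C →ₗ[k] C ⊗[k] C}
    (hD : ∀ h x, D (act h x) = Psi2 k H C act (Δ h ⊗ₜ[k] D₀ x))
    (U : H ⊗[k] H) (w : C ⊗[k] C) :
    lTensor C D (Psi2 k H C act (U ⊗ₜ[k] w)) =
      Psi3 act (lTensor H Δ U ⊗ₜ[k] lTensor C D₀ w) := by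
  induction U using TensorProduct.induction_on with
  | zero => simp
  | add u v hu hv => simp only [add_tmul, map_add, hu, hv]
  | tmul x y =>
    induction w using TensorProduct.induction_on with
    | zero => simp
    | add w₁ w₂ h₁ h₂ => simp only [tmul_add, map_add, h₁, h₂]
    | tmul c c' => simp only [Psi2_tmul, lTensor_tmul, Psi3_tmul, hD]

theorem assoc_rTensor_Psi2 {D D₀ : C →ₗ[k] C ⊗[k] C}
    (hD : ∀ h x, D (act h x) = Psi2 k H C act (Δ h ⊗ₜ[k] D₀ x))
    (U : H ⊗[k] H) (w : C ⊗[k] C) :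
    TensorProduct.assoc k C C C (rTensor C D (Psi2 k H C act (U ⊗ₜ[k] w))) =
      Psi3 act (TensorProduct.assoc k H H H (rTensor H Δ U) ⊗ₜ[k]
        TensorProduct.assoc k C C C (rTensor C D₀ w)) := by
  induction U using TensorProduct.induction_on with
  | zero => simp
  | add u v hu hv => simp only [add_tmul, map_add, hu, hv]
  | tmul x y =>
    induction w using TensorProduct.induction_on with
    | zero => simp
    | add w₁ w₂ h₁ h₂ => simp only [tmul_add, map_add, h₁, h₂]
    | tmul c c' => simp only [Psi2_tmul, rTensor_tmul, hD, assoc_Psi2_tmul_act]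

section Counit

variable {s : Finset (H × H)} (hs : Δ 1 = ∑ p ∈ s, p.1 ⊗ₜ[k] p.2) (f : C →ₗ[k] k)
include hs

theorem etil_eq_PiL_of_forall {x : C} {y : H} (hxy : ∀ a, f (act a x) = ε (a * y)) :
    etil k H Δ C act f x = PiL k H Δ ε y := by
  simp only [etil_eq_sum hs, PiL_eq_sum hs, hxy]

theorem Sinv_eq_sum_of_forall (hh : IsWeakHopf k H Δ ε S) (hinv : ∀ h, Sinv (S h) = h)
    {x : C} {y : H} (hy : PiL k H Δ ε y = y) (hxy : ∀ a, f (act a x) = ε (a * y)) :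
    Sinv y = ∑ p ∈ s, f (act p.2 x) • p.1 := by
  rw [← hy, Sinv_PiL hh hs hinv, PiLbar_eq_sum hs]
  simp only [hxy]

theorem lid_rTensor_sigmaC (w : C ⊗[k] C) :
    TensorProduct.lid k C (rTensor C f (DK14.sigmaC k H Δ C act w)) =
      evC k H C act (TensorProduct.map (etil k H Δ C act f) id w) := by
  induction w using TensorProduct.induction_on with
  | zero => simp
  | add w₁ w₂ h₁ h₂ => simp only [map_add, h₁, h₂]
  | tmul c c' =>
    simp [sigmaC_apply, hs, etil_eq_sum hs, TensorProduct.sum_tmul, map_sum, Psi2_tmul,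
      evC_tmul]

theorem rid_lTensor_sigmaC {e : C →ₗ[k] H}
    (he : ∀ x, e x = ∑ p ∈ s, f (act p.2 x) • p.1) (w : C ⊗[k] C) :
    TensorProduct.rid k C (lTensor C f (DK14.sigmaC k H Δ C act w)) =
      evC k H C act (TensorProduct.map e id (TensorProduct.comm k C C w)) := by
  induction w using TensorProduct.induction_on with
  | zero => simp
  | add w₁ w₂ h₁ h₂ => simp only [map_add, h₁, h₂]
  | tmul c c' =>
    simp [sigmaC_apply, hs, he, TensorProduct.sum_tmul, map_sum, Psi2_tmul, evC_tmul]

end Counit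

end Module

theorem apply_eq_of_mkQ_eq {M N : Type*} [AddCommGroup M] [Module k M] [AddCommGroup N]
    [Module k N] {p : Submodule k M} {f : M →ₗ[k] N} (hpf : p ≤ ker f) {w w' : M}
    (h : p.mkQ w = p.mkQ w') : f w = f w' := by
  simpa using congrArg (p.liftQ f hpf) h

namespace IsWeakModuleCoalgebra

variable {C : Type*} [AddCommGroup C] [Module k C] {act : H →ₗ[k] C →ₗ[k] C}
  {ΔC : C →ₗ[k] C ⊗[k] C} {εC : C →ₗ[k] k}
  (hwm : IsWeakModuleCoalgebra k H Δ ε C act ΔC εC)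
include hwm

theorem coassoc (c : C) :
    TensorProduct.assoc k C C C (rTensor C ΔC (ΔC c)) = lTensor C ΔC (ΔC c) := hwm.1 c

theorem lid_rTensor_counit (c : C) : TensorProduct.lid k C (rTensor C εC (ΔC c)) = c :=
  hwm.2.1 c

theorem rid_lTensor_counit (c : C) : TensorProduct.rid k C (lTensor C εC (ΔC c)) = c :=
  hwm.2.2.1 c

theorem mul_act (g h : H) (c : C) : act (g * h) c = act g (act h c) := hwm.2.2.2.1 g h c

theorem one_act (c : C) : act 1 c = c := hwm.2.2.2.2.1 c

theorem comul_act (h : H) (c : C) : ΔC (act h c) = Psi2 k H C act (Δ h ⊗ₜ[k] ΔC c) :=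
  hwm.2.2.2.2.2.1 h c

theorem counit_mul_act (h g : H) (c : C) :
    εC (act (h * g) c) = TensorProduct.lid k k
      (TensorProduct.map (εC ∘ₗ act.flip c) (ε ∘ₗ mulLeft k h) (Δ g)) :=
  hwm.2.2.2.2.2.2 h g c

theorem sigmaC_comul (c : C) : DK14.sigmaC k H Δ C act (ΔC c) = ΔC c := by
  rw [sigmaC_apply, ← hwm.comul_act, hwm.one_act]

variable {s : Finset (H × H)} (hs : Δ 1 = ∑ p ∈ s, p.1 ⊗ₜ[k] p.2)
include hs

theorem counit_act (h : H) (c : C) : εC (act h c) = ε (h * etil k H Δ C act εC c) := by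
  have h' := hwm.counit_mul_act h 1 c
  simp only [mul_one, hs, map_sum, TensorProduct.map_tmul, coe_comp, Function.comp_apply,
    flip_apply, mulLeft_apply, lid_tmul, smul_eq_mul] at h'
  simp only [h', etil_eq_sum hs, Finset.mul_sum, mul_smul_comm, map_sum, map_smul, smul_eq_mul]

theorem PiL_etil (c : C) : PiL k H Δ ε (etil k H Δ C act εC c) = etil k H Δ C act εC c :=
  (etil_eq_PiL_of_forall hs εC (hwm.counit_act hs · c)).symm

theorem etil_act (h : H) (c : C) :
    etil k H Δ C act εC (act h c) = PiL k H Δ ε (h * etil k H Δ C act εC c) :=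
  etil_eq_PiL_of_forall hs εC fun a => by rw [← hwm.mul_act, hwm.counit_act hs, mul_assoc]

theorem counit_etil (c : C) : ε (etil k H Δ C act εC c) = εC c := by
  rw [← one_mul (etil k H Δ C act εC c), ← hwm.counit_act hs, hwm.one_act]

theorem isBgdModuleCoalgebra (hh : IsWeakHopf k H Δ ε S) (hinv : ∀ h, Sinv (S h) = h) :
    DK14.IsBgdModuleCoalgebra k H Δ ε Sinv C act ΔC (etil k H Δ C act εC) := by
  refine ⟨hwm.mul_act, hwm.one_act, hwm.PiL_etil hs, fun c => by rw [hwm.coassoc],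
    fun c => ?_, fun c => ?_, fun h c => by rw [hwm.comul_act], hwm.etil_act hs⟩
  · rw [← lid_rTensor_sigmaC hs, hwm.sigmaC_comul, hwm.lid_rTensor_counit]
  · rw [← rid_lTensor_sigmaC hs εC, hwm.sigmaC_comul, hwm.rid_lTensor_counit]
    exact fun x => Sinv_eq_sum_of_forall hs εC hh hinv (hwm.PiL_etil hs x) (hwm.counit_act hs · x)

end IsWeakModuleCoalgebra

end DK
end

noncomputable section
namespace DK14.IsBgdModuleCoalgebra

open DK

variable {k : Type*} [CommRing k] {H : Type*} [Ring H] [Algebra k H]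
  {Δ : H →ₗ[k] H ⊗[k] H} {ε : H →ₗ[k] k} {S Sinv : H →ₗ[k] H}
  {C : Type*} [AddCommGroup C] [Module k C] {act : H →ₗ[k] C →ₗ[k] C}
  {ΔCb : C →ₗ[k] C ⊗[k] C} {εCb : C →ₗ[k] H}
  (hb : IsBgdModuleCoalgebra k H Δ ε Sinv C act ΔCb εCb)
include hb

theorem mul_act (g h : H) (c : C) : act (g * h) c = act g (act h c) := hb.1 g h c

theorem one_act (c : C) : act 1 c = c := hb.2.1 c

theorem PiL_counit (c : C) : PiL k H Δ ε (εCb c) = εCb c := hb.2.2.1 c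

theorem coassoc_mkQ (c : C) :
    (relCb3 k H Δ ε Sinv C act).mkQ (TensorProduct.assoc k C C C (rTensor C ΔCb (ΔCb c))) =
      (relCb3 k H Δ ε Sinv C act).mkQ (lTensor C ΔCb (ΔCb c)) := hb.2.2.2.1 c

theorem evC_map_counit (c : C) : evC k H C act (TensorProduct.map εCb id (ΔCb c)) = c :=
  hb.2.2.2.2.1 c

theorem evC_map_Sinv_counit (c : C) :
    evC k H C act
      (TensorProduct.map (Sinv ∘ₗ εCb) id (TensorProduct.comm k C C (ΔCb c))) = c :=
  hb.2.2.2.2.2.1 c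

theorem comul_act_mkQ (h : H) (c : C) :
    (relCb k H Δ ε Sinv C act).mkQ (ΔCb (act h c)) =
      (relCb k H Δ ε Sinv C act).mkQ (Psi2 k H C act (Δ h ⊗ₜ[k] ΔCb c)) :=
  hb.2.2.2.2.2.2.1 h c

theorem counit_act (h : H) (c : C) : εCb (act h c) = PiL k H Δ ε (h * εCb c) :=
  hb.2.2.2.2.2.2.2 h c

variable {s : Finset (H × H)} (hs : Δ 1 = ∑ p ∈ s, p.1 ⊗ₜ[k] p.2)
include hs

theorem counit_counit_act (hw : IsWeakBialgebra k H Δ ε) (a : H) (c : C) :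
    ε (εCb (act a c)) = ε (a * εCb c) := by
  rw [hb.counit_act, counit_PiL hw hs]

theorem etil_counit_comp (hw : IsWeakBialgebra k H Δ ε) (c : C) :
    etil k H Δ C act (ε ∘ₗ εCb) c = εCb c :=
  (etil_eq_PiL_of_forall hs _ (hb.counit_counit_act hs hw · c)).trans (hb.PiL_counit c)

section WeakHopf

variable (hh : IsWeakHopf k H Δ ε S) (hinv : ∀ h, Sinv (S h) = h)
include hh hinv

theorem mkQ_sigmaC (w : C ⊗[k] C) :
    (relCb k H Δ ε Sinv C act).mkQ (sigmaC k H Δ C act w) =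
      (relCb k H Δ ε Sinv C act).mkQ w := by
  have hw := hh.isWeakBialgebra
  induction w using TensorProduct.induction_on with
  | zero => simp
  | add u v hu hv => simp only [map_add, hu, hv]
  | tmul c c' =>
    -- `1₍₁₎·c ⊗ 1₍₂₎·c' = Π̄^L(1₍₁₎)·c ⊗ 1₍₂₎·c' ≡ c ⊗ Π^L(1₍₁₎) 1₍₂₎·c' = c ⊗ c'`
    have hbal (q : H × H) :
        (relCb k H Δ ε Sinv C act).mkQ (act (PiLbar Δ ε q.1) c ⊗ₜ[k] act q.2 c') =
          (relCb k H Δ ε Sinv C act).mkQ (c ⊗ₜ[k] act (PiL k H Δ ε q.1 * q.2) c') := by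
      rw [← Sinv_PiL hh hs hinv, Submodule.mkQ_apply, Submodule.mkQ_apply,
        Submodule.Quotient.eq, hb.mul_act]
      exact Submodule.subset_span ⟨q.1, c, act q.2 c', rfl⟩
    rw [sigmaC_apply, ← sum_PiLbar_fst_tmul_snd hw hs, TensorProduct.sum_tmul, map_sum, map_sum]
    simp only [Psi2_tmul, hbal]
    rw [← map_sum, ← TensorProduct.tmul_sum, ← LinearMap.sum_apply, ← map_sum,
      sum_PiL_fst_mul_snd hw hs, hb.one_act]

theorem sigmaC_comul_act (h : H) (c : C) :
    sigmaC k H Δ C act (ΔCb (act h c)) = Psi2 k H C act (Δ h ⊗ₜ[k] ΔCb c) := by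
  rw [apply_eq_of_mkQ_eq (relCb_le_ker_sigmaC hh hs hinv hb.mul_act) (hb.comul_act_mkQ h c),
    sigmaC_apply, Psi2_tmul_Psi2 hb.mul_act, hh.isWeakBialgebra.comul_one_mul_comul]

theorem isWeakModuleCoalgebra :
    IsWeakModuleCoalgebra k H Δ ε C act (sigmaC k H Δ C act ∘ₗ ΔCb) (ε ∘ₗ εCb) := by
  have hw := hh.isWeakBialgebra
  have hD := hb.sigmaC_comul_act hs hh hinv
  refine ⟨fun c => ?_, fun c => ?_, fun c => ?_, hb.mul_act, hb.one_act, fun h c => ?_,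
    fun h g c => ?_⟩
  · calc TensorProduct.assoc k C C C (rTensor C (sigmaC k H Δ C act ∘ₗ ΔCb)
          (Psi2 k H C act (Δ 1 ⊗ₜ[k] ΔCb c)))
        = sigmaC3 Δ act (TensorProduct.assoc k C C C (rTensor C ΔCb (ΔCb c))) := by
          rw [assoc_rTensor_Psi2 hD, hw.coassoc]; rfl
      _ = sigmaC3 Δ act (lTensor C ΔCb (ΔCb c)) :=
          apply_eq_of_mkQ_eq (relCb3_le_ker_sigmaC3 hh hs hinv hb.mul_act) (hb.coassoc_mkQ c)
      _ = _ := (lTensor_Psi2 hD (Δ 1) (ΔCb c)).symm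
  · rw [comp_apply, lid_rTensor_sigmaC hs,
      show etil k H Δ C act (ε ∘ₗ εCb) = εCb from LinearMap.ext (hb.etil_counit_comp hs hw),
      hb.evC_map_counit]
  · rw [comp_apply, rid_lTensor_sigmaC hs (ε ∘ₗ εCb) (e := Sinv ∘ₗ εCb),
      hb.evC_map_Sinv_counit]
    exact fun x =>
      Sinv_eq_sum_of_forall hs _ hh hinv (hb.PiL_counit x) (hb.counit_counit_act hs hw · x)
  · rw [comp_apply, hD, comp_apply, sigmaC_apply, Psi2_tmul_Psi2 hb.mul_act,
      hw.comul_mul_comul_one]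
  · have hcounit : (ε ∘ₗ εCb) ∘ₗ act.flip c = ε ∘ₗ mulRight k (εCb c) := by
      ext a
      exact hb.counit_counit_act hs hw a c
    rw [hcounit, comp_apply, hb.counit_counit_act hs hw, hw.counit_mul_mul' h g (εCb c)]
    rfl

end WeakHopf

end DK14.IsBgdModuleCoalgebra
end

theorem stmt14_general (k : Type*) [CommRing k] (H : Type*) [Ring H] [Algebra k H]
    (Δ : H →ₗ[k] H ⊗[k] H) (ε : H →ₗ[k] k) (S Sinv : H →ₗ[k] H)
    (hwh : DK.IsWeakHopf k H Δ ε S)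
    (hinv1 : ∀ h, Sinv (S h) = h) :
    -- (1) a weak module coalgebra is a module coalgebra over the bialgebroid:
    (∀ (C : Type) [AddCommGroup C] [Module k C] (act : H →ₗ[k] C →ₗ[k] C)
        (ΔC : C →ₗ[k] C ⊗[k] C) (εC : C →ₗ[k] k),
      DK.IsWeakModuleCoalgebra k H Δ ε C act ΔC εC →
        DK14.IsBgdModuleCoalgebra k H Δ ε Sinv C act ΔC (DK.etil k H Δ C act εC)) ∧
    -- (2) conversely, a bialgebroid module coalgebra becomes a weak one:
    (∀ (C : Type) [AddCommGroup C] [Module k C] (act : H →ₗ[k] C →ₗ[k] C)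
        (ΔCb : C →ₗ[k] C ⊗[k] C) (εCb : C →ₗ[k] H),
      DK14.IsBgdModuleCoalgebra k H Δ ε Sinv C act ΔCb εCb →
        DK.IsWeakModuleCoalgebra k H Δ ε C act
          (DK14.sigmaC k H Δ C act ∘ₗ ΔCb) (ε ∘ₗ εCb)) ∧
    -- (3) round trip on the weak side is the identity:
    (∀ (C : Type) [AddCommGroup C] [Module k C] (act : H →ₗ[k] C →ₗ[k] C)
        (ΔC : C →ₗ[k] C ⊗[k] C) (εC : C →ₗ[k] k),
      DK.IsWeakModuleCoalgebra k H Δ ε C act ΔC εC →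
        (∀ c : C, DK14.sigmaC k H Δ C act (ΔC c) = ΔC c) ∧
        (∀ c : C, ε (DK.etil k H Δ C act εC c) = εC c)) ∧
    -- (4) round trip on the bialgebroid side is the identity (the coproduct up to the
    --     balancing relations, the counit exactly):
    (∀ (C : Type) [AddCommGroup C] [Module k C] (act : H →ₗ[k] C →ₗ[k] C)
        (ΔCb : C →ₗ[k] C ⊗[k] C) (εCb : C →ₗ[k] H),
      DK14.IsBgdModuleCoalgebra k H Δ ε Sinv C act ΔCb εCb →
        (∀ c : C, (DK14.relCb k H Δ ε Sinv C act).mkQ (DK14.sigmaC k H Δ C act (ΔCb c)) =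
          (DK14.relCb k H Δ ε Sinv C act).mkQ (ΔCb c)) ∧
        (∀ c : C, DK.etil k H Δ C act (ε ∘ₗ εCb) c = εCb c)) := by
  obtain ⟨s, hs⟩ := TensorProduct.exists_finset (Δ 1)
  refine ⟨fun C _ _ act ΔC εC hwm => hwm.isBgdModuleCoalgebra hs hwh hinv1,
    fun C _ _ act ΔCb εCb hb => hb.isWeakModuleCoalgebra hs hwh hinv1,
    fun C _ _ act ΔC εC hwm => ⟨hwm.sigmaC_comul, hwm.counit_etil hs⟩,
    fun C _ _ act ΔCb εCb hb => ⟨fun c => hb.mkQ_sigmaC hs hwh hinv1 (ΔCb c),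
      hb.etil_counit_comp hs hwh.isWeakBialgebra⟩⟩

/-- Let `H` be a weak Hopf algebra with bijective antipode, viewed as an
`R`-bialgebroid over `R = Im Π^L`.  The categories of left weak `H`-module coalgebras and
of left module coalgebras over the `R`-bialgebroid `H` are isomorphic.  The functors are
the identity on the underlying `H`-module; a weak structure `(Δ_C, ε_C)` is sent to the
projected coproduct together with the counit `c ↦ ε_C(1₍₁₎·c) 1₍₂₎ ∈ R`, and a bialgebroid
structure `(Δ_C, ε_C)` is sent to the coproduct `c ↦ 1₍₁₎·c₍₁₎ ⊗ 1₍₂₎·c₍₂₎` together with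
the counit `ε ∘ ε_C`; these constructions are mutually inverse. -/
theorem stmt14 (k : Type*) [CommRing k] (H : Type*) [Ring H] [Algebra k H]
    (Δ : H →ₗ[k] H ⊗[k] H) (ε : H →ₗ[k] k) (S Sinv : H →ₗ[k] H)
    (hwh : DK.IsWeakHopf k H Δ ε S)
    (hinv1 : ∀ h, Sinv (S h) = h) (hinv2 : ∀ h, S (Sinv h) = h) :
    -- (1) a weak module coalgebra is a module coalgebra over the bialgebroid:
    (∀ (C : Type) [AddCommGroup C] [Module k C] (act : H →ₗ[k] C →ₗ[k] C)
        (ΔC : C →ₗ[k] C ⊗[k] C) (εC : C →ₗ[k] k),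
      DK.IsWeakModuleCoalgebra k H Δ ε C act ΔC εC →
        DK14.IsBgdModuleCoalgebra k H Δ ε Sinv C act ΔC (DK.etil k H Δ C act εC)) ∧
    -- (2) conversely, a bialgebroid module coalgebra becomes a weak one:
    (∀ (C : Type) [AddCommGroup C] [Module k C] (act : H →ₗ[k] C →ₗ[k] C)
        (ΔCb : C →ₗ[k] C ⊗[k] C) (εCb : C →ₗ[k] H),
      DK14.IsBgdModuleCoalgebra k H Δ ε Sinv C act ΔCb εCb →
        DK.IsWeakModuleCoalgebra k H Δ ε C act
          (DK14.sigmaC k H Δ C act ∘ₗ ΔCb) (ε ∘ₗ εCb)) ∧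
    -- (3) round trip on the weak side is the identity:
    (∀ (C : Type) [AddCommGroup C] [Module k C] (act : H →ₗ[k] C →ₗ[k] C)
        (ΔC : C →ₗ[k] C ⊗[k] C) (εC : C →ₗ[k] k),
      DK.IsWeakModuleCoalgebra k H Δ ε C act ΔC εC →
        (∀ c : C, DK14.sigmaC k H Δ C act (ΔC c) = ΔC c) ∧
        (∀ c : C, ε (DK.etil k H Δ C act εC c) = εC c)) ∧
    -- (4) round trip on the bialgebroid side is the identity (the coproduct up to the
    --     balancing relations, the counit exactly):
    (∀ (C : Type) [AddCommGroup C] [Module k C] (act : H →ₗ[k] C →ₗ[k] C)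
        (ΔCb : C →ₗ[k] C ⊗[k] C) (εCb : C →ₗ[k] H),
      DK14.IsBgdModuleCoalgebra k H Δ ε Sinv C act ΔCb εCb →
        (∀ c : C, (DK14.relCb k H Δ ε Sinv C act).mkQ (DK14.sigmaC k H Δ C act (ΔCb c)) =
          (DK14.relCb k H Δ ε Sinv C act).mkQ (ΔCb c)) ∧
        (∀ c : C, DK.etil k H Δ C act (ε ∘ₗ εCb) c = εCb c)) :=
  stmt14_general k H Δ ε S Sinv hwh hinv1
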